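/- arXiv:1402.4112 — 2 statements merged into one kernel-verified Lean document; each statement's English description precedes it below -/
import Mathlib

section
/- Let (A_n)_{n=0}^∞ be an increasing sequence of finite nonempty alphabets with union A, let k ∈ ℕ, let E ⊆ W(A), and let 𝐬 be an infinite sequence of variable words over A such that E is k-large in 𝐬. If r ≥ 2 and E = E_1 ∪ ⋯ ∪ E_r, then there exist 1 ≤ i ≤ r and an infinite extracted k-subsequence 𝐭 of 𝐬 such that E_i is k-large in 𝐭. -/
/- Words over an alphabet are `List α`.  The variable symbol `x` is modelled by
`none : Option α`, and variable words are lists over `Option α` containing `none`. -/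

namespace HJ

variable {α : Type*}

/-- Substitution of the letter `a` for every occurrence of the variable in a
variable word, producing a constant word. -/
def substC (s : List (Option α)) (a : α) : List α :=
  s.map (fun b => b.getD a)

/-- Substitution of `b ∈ A ∪ {x}` (a letter `some a` or the variable `none`)
for every occurrence of the variable. -/
def substV (s : List (Option α)) (b : Option α) : List (Option α) :=
  s.map (fun c => Option.elim c b some)

/-- `s` is a variable word over the alphabet `S`: all its letters lie in `S`
and it contains at least one occurrence of the variable. -/
def IsVarWord (S : Set α) (s : List (Option α)) : Prop :=
  (∀ a : α, some a ∈ s → a ∈ S) ∧ none ∈ s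

/-- `W(S)`: the set of (constant) words over the alphabet `S`. -/
def WordsOver (S : Set α) : Set (List α) :=
  { w | ∀ a ∈ w, a ∈ S }

/-- The constant span of the sequence `s` of variable words, with indices
restricted to `I` and the letter substituted at position `l i` taken from the
alphabet `B (l i)`: all concatenations `s_{l_0}(a_0) ⋯ s_{l_n}(a_n)` with
`l_0 < ⋯ < l_n` in `I` and `a_i ∈ B (l_i)`. -/
def constSpan (B : ℕ → Set α) (s : ℕ → List (Option α)) (I : Set ℕ) :
    Set (List α) :=
  { w | ∃ (n : ℕ) (l : Fin (n + 1) → ℕ) (a : Fin (n + 1) → α),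
      StrictMono l ∧ (∀ i, l i ∈ I) ∧ (∀ i, a i ∈ B (l i)) ∧
      w = (List.ofFn fun i => substC (s (l i)) (a i)).flatten }

/-- The variable span of the sequence `s` of variable words, with indices
restricted to `I` and alphabets given by `B`: all concatenations
`s_{l_0}(b_0) ⋯ s_{l_n}(b_n)` with `l_0 < ⋯ < l_n` in `I` and
`b_i ∈ B (l_i) ∪ {x}` which contain at least one occurrence of the variable. -/
def varSpan (B : ℕ → Set α) (s : ℕ → List (Option α)) (I : Set ℕ) :
    Set (List (Option α)) :=
  { w | ∃ (n : ℕ) (l : Fin (n + 1) → ℕ) (b : Fin (n + 1) → Option α),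
      StrictMono l ∧ (∀ i, l i ∈ I) ∧
      (∀ i, ∀ a : α, b i = some a → a ∈ B (l i)) ∧
      none ∈ w ∧
      w = (List.ofFn fun i => substV (s (l i)) (b i)).flatten }

/-- `(t_0, …, t_l)` is a finite extracted subsequence of `s` (with alphabets `B`):
there are `0 = m_0 < m_1 < ⋯` with `t_i` in the variable span of
`(s_n)_{n = m_i}^{m_{i+1} - 1}` (with alphabets `B`) for all `i ≤ l`. -/
def ExtractedFin (B : ℕ → Set α) (s t : ℕ → List (Option α)) (l : ℕ) : Prop :=
  ∃ m : ℕ → ℕ, m 0 = 0 ∧ StrictMono m ∧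
    ∀ i ≤ l, t i ∈ varSpan B s (Set.Ico (m i) (m (i + 1)))

/-- `t` is an infinite extracted subsequence of `s` (with alphabets `B`). -/
def Extracted (B : ℕ → Set α) (s t : ℕ → List (Option α)) : Prop :=
  ∀ l : ℕ, ExtractedFin B s t l

/-- `E` is large in `s` (with alphabets `B`): `E` meets the constant span of
every infinite extracted subsequence of `s`. -/
def IsLarge (B : ℕ → Set α) (E : Set (List α)) (s : ℕ → List (Option α)) : Prop :=
  ∀ w : ℕ → List (Option α), Extracted B s w →
    (E ∩ constSpan B w Set.univ).Nonempty

/-- `E_F = {z ∈ W(S) : w ++ z ∈ E for every w ∈ F}`. -/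
def wordQuot (S : Set α) (E F : Set (List α)) : Set (List α) :=
  { z | z ∈ WordsOver S ∧ ∀ w ∈ F, w ++ z ∈ E }

end HJ

/-! If `E₀` is not large in `s`, some extracted subsequence `w` of `s` has a constant span
disjoint from `E₀`. Every extracted subsequence `u` of `w` is extracted from `s`, and its constant
span lies inside that of `w`, so the part of `E₀ ∪ E₁` it meets lies in `E₁`: thus `E₁` is large
in `w`. Induction on the number of pieces finishes the proof. Both facts about `u` are instances
of one composition property: substituting into words of the `s`-span that are themselves
concatenations of words of the `s`-span gives words of the `s`-span. -/

namespace HJ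

variable {α : Type*} {B : ℕ → Set α}

@[simp]
theorem substV_none (s : List (Option α)) : substV s none = s := by
  simp only [substV]
  conv_rhs => rw [← List.map_id s]
  exact List.map_congr_left fun c _ => by cases c <;> rfl

theorem substV_substV (s : List (Option α)) (b c : Option α) :
    substV (substV s b) c = substV s (b.elim c some) := by
  simp only [substV, List.map_map]
  exact List.map_congr_left fun d _ => by cases d <;> cases b <;> rfl

theorem map_some_substC (s : List (Option α)) (a : α) :
    (substC s a).map some = substV s (some a) := by
  simp only [substC, substV, List.map_map]
  exact List.map_congr_left fun d _ => by cases d <;> rfl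

def concatSubst (s : ℕ → List (Option α)) (L : List (ℕ × Option α)) : List (Option α) :=
  (L.map fun p => substV (s p.1) p.2).flatten

theorem concatSubst_flatMap (s : ℕ → List (Option α)) (L : List (ℕ × Option α))
    (F : ℕ × Option α → List (ℕ × Option α)) :
    concatSubst s (L.flatMap F) = (L.map fun p => concatSubst s (F p)).flatten := by
  simp only [concatSubst, List.flatMap_def, List.map_flatten, List.flatten_flatten, List.map_map]
  rfl

theorem substV_concatSubst (s : ℕ → List (Option α)) (L : List (ℕ × Option α))
    (b : Option α) :
    substV (concatSubst s L) b = concatSubst s (L.map fun r => (r.1, r.2.elim b some)) := by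
  simp only [concatSubst, substV, List.map_flatten, List.map_map]
  congr 1
  exact List.map_congr_left fun r _ => by simpa [substV] using substV_substV (s r.1) r.2 b

/-- The span of `s` over the indices in `I` with the letter for `s n` taken from `P n`, a word
`s_{l_0}(b_0) ⋯ s_{l_n}(b_n)` being coded by the sorted list `[(l_0, b_0), …, (l_n, b_n)]`.
`varSpan` is the case `P n = B n ∪ {x}` cut down to words containing `x`, and `constSpan` is the
case `P n = B n` read through `some`. -/
def span (P : ℕ → Set (Option α)) (s : ℕ → List (Option α)) (I : Set ℕ) :
    Set (List (Option α)) :=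
  { w | ∃ L : List (ℕ × Option α), L ≠ [] ∧ L.Pairwise (fun p q => p.1 < q.1) ∧
      (∀ p ∈ L, p.1 ∈ I ∧ p.2 ∈ P p.1) ∧ w = concatSubst s L }

theorem mem_span_iff_ofFn {P : ℕ → Set (Option α)} {s : ℕ → List (Option α)} {I : Set ℕ}
    {w : List (Option α)} :
    w ∈ span P s I ↔ ∃ (n : ℕ) (l : Fin (n + 1) → ℕ) (b : Fin (n + 1) → Option α),
      StrictMono l ∧ (∀ i, l i ∈ I) ∧ (∀ i, b i ∈ P (l i)) ∧
      w = (List.ofFn fun i => substV (s (l i)) (b i)).flatten := by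
  constructor
  · rintro ⟨_ | ⟨p, L⟩, hne, hsorted, hmem, rfl⟩
    · exact absurd rfl hne
    refine ⟨L.length, fun i => ((p :: L)[i]).1, fun i => ((p :: L)[i]).2,
      fun i j hij => List.pairwise_iff_getElem.mp hsorted _ _ _ _ hij,
      fun i => (hmem _ (List.getElem_mem _)).1, fun i => (hmem _ (List.getElem_mem _)).2, ?_⟩
    rw [concatSubst, ← List.ofFn_getElem_eq_map]
    rfl
  · rintro ⟨n, l, b, hl, hI, hP, rfl⟩
    refine ⟨List.ofFn fun i => (l i, b i), by simp, List.pairwise_ofFn.mpr fun i j hij => hl hij,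
      ?_, by simp [concatSubst, List.map_ofFn, Function.comp_def]⟩
    simp only [List.mem_ofFn, forall_exists_index]
    rintro _ i rfl
    exact ⟨hI i, hP i⟩

theorem mem_insert_none_image_some {S : Set α} {b : Option α} :
    b ∈ insert none (some '' S) ↔ ∀ a, b = some a → a ∈ S := by
  cases b <;> simp

theorem mem_varSpan_iff {s : ℕ → List (Option α)} {I : Set ℕ} {w : List (Option α)} :
    w ∈ varSpan B s I ↔ w ∈ span (fun n => insert none (some '' B n)) s I ∧ none ∈ w := by
  simp only [mem_span_iff_ofFn, mem_insert_none_image_some]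
  constructor
  · rintro ⟨n, l, b, hl, hI, hb, hw, rfl⟩
    exact ⟨⟨n, l, b, hl, hI, hb, rfl⟩, hw⟩
  · rintro ⟨⟨n, l, b, hl, hI, hb, rfl⟩, hw⟩
    exact ⟨n, l, b, hl, hI, hb, hw, rfl⟩

theorem mem_constSpan_iff {s : ℕ → List (Option α)} {I : Set ℕ} {w : List α} :
    w ∈ constSpan B s I ↔ w.map some ∈ span (fun n => some '' B n) s I := by
  simp only [mem_span_iff_ofFn]
  constructor
  · rintro ⟨n, l, a, hl, hI, ha, rfl⟩
    refine ⟨n, l, fun i => some (a i), hl, hI, fun i => Set.mem_image_of_mem _ (ha i), ?_⟩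
    simp [List.map_flatten, List.map_ofFn, Function.comp_def, map_some_substC]
  · rintro ⟨n, l, b, hl, hI, hb, hw⟩
    choose a ha hab using hb
    refine ⟨n, l, a, hl, hI, ha, List.map_injective_iff.mpr (Option.some_injective α) ?_⟩
    simp [hw, ← hab, List.map_flatten, List.map_ofFn, Function.comp_def, map_some_substC]

/-- A letter of `t` at index `i` is substituted for the variable of `s` at indices `≥ m i ≥ i`,
where `P` is at least as large. -/
theorem span_subset_span_of_blocks {P : ℕ → Set (Option α)} (hP : Monotone P)
    (hBP : ∀ n, some '' B n ⊆ P n) {s t : ℕ → List (Option α)} {m : ℕ → ℕ}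
    (hm : StrictMono m) {I J : Set ℕ}
    (ht : ∀ i ∈ I, t i ∈ span (fun n => insert none (some '' B n)) s (Set.Ico (m i) (m (i + 1))))
    (hJ : ∀ i ∈ I, Set.Ico (m i) (m (i + 1)) ⊆ J) :
    span P t I ⊆ span P s J := by
  rintro w ⟨L, hne, hsorted, hmem, rfl⟩
  choose! C hCne hCsorted hCmem hC using ht
  set F : ℕ × Option α → List (ℕ × Option α) :=
    fun p => (C p.1).map fun r => (r.1, r.2.elim p.2 some)
  have hF : ∀ p ∈ L, ∀ x ∈ F p, x.1 ∈ Set.Ico (m p.1) (m (p.1 + 1)) ∧ x.2 ∈ P x.1 := by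
    intro p hp x hx
    obtain ⟨r, hr, rfl⟩ := List.mem_map.mp hx
    obtain ⟨hrI, hr2 | ⟨a, ha, hr2⟩⟩ := hCmem p.1 (hmem p hp).1 r hr
    · simp only [hr2, Option.elim_none]
      exact ⟨hrI, hP ((hm.id_le p.1).trans hrI.1) (hmem p hp).2⟩
    · simp only [← hr2, Option.elim_some]
      exact ⟨hrI, hBP _ ⟨a, ha, rfl⟩⟩
  refine ⟨L.flatMap F, ?_, ?_, ?_, ?_⟩
  · obtain ⟨p, hp⟩ := List.exists_mem_of_ne_nil L hne
    rw [Ne, List.flatMap_eq_nil_iff]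
    push Not
    exact ⟨p, hp, by simpa [F] using hCne p.1 (hmem p hp).1⟩
  · refine List.pairwise_flatMap.mpr ⟨fun p hp => List.pairwise_map.mpr ?_, ?_⟩
    · exact hCsorted p.1 (hmem p hp).1
    · refine hsorted.imp_of_mem fun {p q} hp hq hpq x hx y hy => ?_
      calc x.1 < m (p.1 + 1) := (hF p hp x hx).1.2
        _ ≤ m q.1 := hm.monotone hpq
        _ ≤ y.1 := (hF q hq y hy).1.1
  · intro x hx
    obtain ⟨p, hp, hx⟩ := List.mem_flatMap.mp hx
    exact ⟨hJ p.1 (hmem p hp).1 (hF p hp x hx).1, (hF p hp x hx).2⟩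
  · rw [concatSubst_flatMap, concatSubst]
    congr 1
    exact List.map_congr_left fun p hp => by rw [hC p.1 (hmem p hp).1, substV_concatSubst]
theorem varSpan_subset_of_blocks (hB : Monotone B) {s t : ℕ → List (Option α)} {m : ℕ → ℕ}
    (hm : StrictMono m) {I J : Set ℕ}
    (ht : ∀ i ∈ I, t i ∈ varSpan B s (Set.Ico (m i) (m (i + 1))))
    (hJ : ∀ i ∈ I, Set.Ico (m i) (m (i + 1)) ⊆ J) :
    varSpan B t I ⊆ varSpan B s J := by
  intro w hw
  rw [mem_varSpan_iff] at hw ⊢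
  refine ⟨span_subset_span_of_blocks ?_ (fun n => Set.subset_insert _ _) hm
    (fun i hi => (mem_varSpan_iff.mp (ht i hi)).1) hJ hw.1, hw.2⟩
  exact fun i j hij => Set.insert_subset_insert (Set.image_mono (hB hij))

theorem constSpan_subset_of_blocks (hB : Monotone B) {s t : ℕ → List (Option α)} {m : ℕ → ℕ}
    (hm : StrictMono m) {I J : Set ℕ}
    (ht : ∀ i ∈ I, t i ∈ varSpan B s (Set.Ico (m i) (m (i + 1))))
    (hJ : ∀ i ∈ I, Set.Ico (m i) (m (i + 1)) ⊆ J) :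
    constSpan B t I ⊆ constSpan B s J := by
  intro w hw
  rw [mem_constSpan_iff] at hw ⊢
  exact span_subset_span_of_blocks (fun i j hij => Set.image_mono (hB hij)) (fun n => subset_rfl)
    hm (fun i hi => (mem_varSpan_iff.mp (ht i hi)).1) hJ hw

theorem exists_mem_constSpan_Iio {s : ℕ → List (Option α)} {w : List α}
    (hw : w ∈ constSpan B s Set.univ) : ∃ q, w ∈ constSpan B s (Set.Iio q) := by
  obtain ⟨n, l, a, hl, -, ha, rfl⟩ := hw
  exact ⟨l (Fin.last n) + 1, n, l, a, hl,
    fun i => Nat.lt_succ_of_le (hl.monotone (Fin.le_last i)), ha, rfl⟩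

theorem self_mem_varSpan {s : ℕ → List (Option α)} {I : Set ℕ} {j : ℕ} (hj : j ∈ I)
    (hs : none ∈ s j) : s j ∈ varSpan B s I :=
  mem_varSpan_iff.mpr ⟨⟨[(j, none)], by simp, by simp, by simp [hj], by simp [concatSubst]⟩, hs⟩

variable {s t u : ℕ → List (Option α)}

theorem Extracted.none_mem (h : Extracted B s t) (n : ℕ) : none ∈ t n := by
  obtain ⟨m, -, -, hm⟩ := h n
  exact (mem_varSpan_iff.mp (hm n le_rfl)).2

theorem extracted_self (hs : ∀ n, none ∈ s n) : Extracted B s s :=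
  fun _ => ⟨id, rfl, strictMono_id, fun i _ => self_mem_varSpan ⟨le_rfl, i.lt_succ_self⟩ (hs i)⟩

theorem Extracted.trans (hB : Monotone B) (hst : Extracted B s t) (htu : Extracted B t u) :
    Extracted B s u := by
  intro l
  obtain ⟨mu, hmu0, hmu, hu⟩ := htu l
  obtain ⟨mt, hmt0, hmt, ht⟩ := hst (mu (l + 1))
  refine ⟨mt ∘ mu, by simp [hmu0, hmt0], hmt.comp hmu, fun i hi => ?_⟩
  refine varSpan_subset_of_blocks hB hmt (fun j hj => ht j ?_) (fun j hj => ?_) (hu i hi)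
  · exact (hj.2.trans_le (hmu.monotone (by omega))).le
  · exact Set.Ico_subset_Ico (hmt.monotone hj.1) (hmt.monotone hj.2)

theorem Extracted.constSpan_subset (hB : Monotone B) (htu : Extracted B t u) :
    constSpan B u Set.univ ⊆ constSpan B t Set.univ := by
  intro w hw
  obtain ⟨q, hwq⟩ := exists_mem_constSpan_Iio hw
  obtain ⟨m, -, hm, hu⟩ := htu q
  exact constSpan_subset_of_blocks hB hm (fun i hi => hu i (le_of_lt hi))
    (fun _ _ => Set.subset_univ _) hwq

theorem not_isLarge_empty (hs : ∀ n, none ∈ s n) : ¬ IsLarge B ∅ s := fun h => by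
  simpa using h s (extracted_self hs)

theorem IsLarge.exists_extracted_of_union {E₀ E₁ : Set (List α)} (hB : Monotone B)
    (hs : ∀ n, none ∈ s n) (h : IsLarge B (E₀ ∪ E₁) s) :
    ∃ t, Extracted B s t ∧ (IsLarge B E₀ t ∨ IsLarge B E₁ t) := by
  by_cases h₀ : IsLarge B E₀ s
  · exact ⟨s, extracted_self hs, Or.inl h₀⟩
  obtain ⟨w, hsw, hdisj⟩ : ∃ w, Extracted B s w ∧ E₀ ∩ constSpan B w Set.univ = ∅ := by
    simpa [IsLarge, Set.not_nonempty_iff_eq_empty] using h₀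
  refine ⟨w, hsw, Or.inr fun u hwu => ?_⟩
  obtain ⟨z, hz | hz, hzu⟩ := h u (hsw.trans hB hwu)
  · have : z ∈ E₀ ∩ constSpan B w Set.univ := ⟨hz, hwu.constSpan_subset hB hzu⟩
    simp [hdisj] at this
  · exact ⟨z, hz, hzu⟩

theorem IsLarge.exists_extracted_of_iUnion (hB : Monotone B) {r : ℕ}
    {E : Fin r → Set (List α)} (hs : ∀ n, none ∈ s n) (h : IsLarge B (⋃ i, E i) s) :
    ∃ (i : Fin r) (t : ℕ → List (Option α)), Extracted B s t ∧ IsLarge B (E i) t := by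
  induction r generalizing s with
  | zero => exact absurd (by simpa using h) (not_isLarge_empty hs)
  | succ r ih =>
    rw [Set.iUnion_fin_add_one_eq_iUnion_succ] at h
    obtain ⟨t, hst, h₀ | hsucc⟩ := h.exists_extracted_of_union hB hs
    · exact ⟨0, t, hst, h₀⟩
    obtain ⟨i, u, htu, hu⟩ := ih (E := E ∘ Fin.succ) hst.none_mem hsucc
    exact ⟨i.succ, u, hst.trans hB htu, hu⟩

end HJ

open HJ in
theorem stmt12_general {α : Type*} (A : ℕ → Finset α) (hmono : Monotone A) (k : ℕ) (E : Set (List α))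
    (s : ℕ → List (Option α)) (hs : ∀ n, IsVarWord (⋃ n, (A n : Set α)) (s n))
    (hlarge : IsLarge (fun n => (A (k + n) : Set α)) E s)
    (r : ℕ) (E' : Fin r → Set (List α)) (hE' : E = ⋃ i, E' i) :
    ∃ (i : Fin r) (t : ℕ → List (Option α)),
      Extracted (fun n => (A (k + n) : Set α)) s t ∧
      IsLarge (fun n => (A (k + n) : Set α)) (E' i) t := by
  have hB : Monotone fun n => (A (k + n) : Set α) :=
    fun _ _ hmn => Finset.coe_subset.mpr (hmono (Nat.add_le_add_left hmn k))
  rw [hE'] at hlarge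
  exact hlarge.exists_extracted_of_iUnion hB fun n => (hs n).2

open HJ in
/-- If a `k`-large set is partitioned into finitely many pieces, some piece is
`k`-large in some extracted `k`-subsequence. -/
theorem stmt12 {α : Type*} (A : ℕ → Finset α) (hmono : Monotone A)
    (hne : ∀ n, (A n).Nonempty) (k : ℕ)
    (E : Set (List α)) (hE : E ⊆ WordsOver (⋃ n, (A n : Set α)))
    (s : ℕ → List (Option α)) (hs : ∀ n, IsVarWord (⋃ n, (A n : Set α)) (s n))
    (hlarge : IsLarge (fun n => (A (k + n) : Set α)) E s)
    (r : ℕ) (hr : 2 ≤ r) (E' : Fin r → Set (List α)) (hE' : E = ⋃ i, E' i) :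
    ∃ (i : Fin r) (t : ℕ → List (Option α)),
      Extracted (fun n => (A (k + n) : Set α)) s t ∧
      IsLarge (fun n => (A (k + n) : Set α)) (E' i) t :=
  stmt12_general A hmono k E s hs hlarge r E' hE'
end

section
/- For every finite nonempty alphabet A, every finite coloring of W(A) admits an infinite sequence (t_n(x))_{n=0}^∞ of variable words over A such that t_n(x) is a left variable word for every n ≥ 1, and for every n ∈ ℕ, every choice of indices 0 = m_0 < m_1 < ⋯ < m_n, and every choice of letters a_0, a_1, …, a_n ∈ A, the concatenated words t_{m_0}(a_0) t_{m_1}(a_1) ⋯ t_{m_n}(a_n) all receive the same color. -/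
/-!
Work in the Stone–Čech compactification of the semigroup of words over `A ∪ {x}` under
concatenation. Let `q` be a minimal idempotent among the ultrafilters on constant words, and `p`
an idempotent ultrafilter on left variable words with `p * q = p`. Writing `σₐ` for the extension
of the substitution `x ↦ a`, `q * σₐ p` is an idempotent below `q`, so minimality gives
`q * σₐ p = q`, while `σₐ p * q = σₐ p` since `σₐ q = q`.

Fix a colour class `C ∈ q` and call `w` extendable when `{y | w ++ y ∈ C} ∈ σ_b p` for all `b`.
Given finitely many extendable words `w`, the first identity yields `v ∈ p` with
`{y | w ++ σₐ v ++ y ∈ C} ∈ q`, and the second then yields a constant `u ∈ q` making every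
`w ++ σₐ (v ++ u)` lie in `C` and again extendable. Starting from an extendable constant word
`e`, this builds left variable words `s n` such that every `e ++ s m₀ (a₀) ⋯ s mₖ (aₖ)` lies
in `C`; take `t 0 = e ++ s 0` and `t n = s n`.
-/

open Filter

attribute [local instance] Ultrafilter.mul Ultrafilter.semigroup

section MinimalIdempotent

variable {M : Type*} [Semigroup M] [TopologicalSpace M] [T2Space M]

theorem exists_minimal_idempotent (hmul : ∀ r : M, Continuous (· * r)) {D : Set M}
    (hne : D.Nonempty) (hD : IsCompact D) (hDmul : ∀ x ∈ D, ∀ y ∈ D, x * y ∈ D) :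
    ∃ q ∈ D, q * q = q ∧ ∀ f ∈ D, f * f = f → f * q = f → q * f = f → f = q := by
  let ideals : Set (Set M) :=
    {L | L ⊆ D ∧ IsClosed L ∧ L.Nonempty ∧ ∀ x ∈ D, ∀ y ∈ L, x * y ∈ L}
  obtain ⟨L, hL⟩ : ∃ L, Minimal (· ∈ ideals) L := by
    refine (zorn_superset_nonempty ideals (fun c hc hchain ⟨L₀, hL₀⟩ => ?_) D
      ⟨subset_rfl, hD.isClosed, hne, hDmul⟩).imp fun L hL => hL.2
    refine ⟨⋂₀ c, ⟨(Set.sInter_subset_of_mem hL₀).trans (hc hL₀).1,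
      isClosed_sInter fun L hL => (hc hL).2.1, ?_, fun x hx y hy => ?_⟩,
      fun L hL => Set.sInter_subset_of_mem hL⟩
    · have : Nonempty c := ⟨⟨L₀, hL₀⟩⟩
      rw [Set.sInter_eq_iInter]
      exact IsCompact.nonempty_iInter_of_directed_nonempty_isCompact_isClosed _
        (DirectedOn.directed_val (IsChain.directedOn hchain.symm)) (fun L => (hc L.2).2.2.1)
        (fun L => hD.of_isClosed_subset (hc L.2).2.1 (hc L.2).1) fun L => (hc L.2).2.1
    · exact Set.mem_sInter.2 fun L hL => (hc hL).2.2.2 x hx y (Set.mem_sInter.1 hy L hL)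
  obtain ⟨hLD, hLclosed, hLne, hLmul⟩ := hL.prop
  have hLcompact : IsCompact L := hD.of_isClosed_subset hLclosed hLD
  obtain ⟨q, hqL, hqq⟩ := exists_idempotent_in_compact_subsemigroup hmul L hLne hLcompact
    fun x hx y hy => hLmul x (hLD hx) y hy
  refine ⟨q, hLD hqL, hqq, fun f hfD hff hfq hqf => ?_⟩
  have hfL : f ∈ L := hfq ▸ hLmul f hfD q hqL
  -- `L * f` is again a closed left ideal, so by minimality `q ∈ L * f`.
  have hLf : (· * f) '' L = L := by
    refine hL.eq_of_subset ⟨?_, (hLcompact.image (hmul f)).isClosed, hLne.image _, ?_⟩ ?_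
    · rintro _ ⟨y, hy, rfl⟩
      exact hLD (hLmul y (hLD hy) f hfL)
    · rintro x hx _ ⟨y, hy, rfl⟩
      exact ⟨x * y, hLmul x hx y hy, mul_assoc x y f⟩
    · rintro _ ⟨y, hy, rfl⟩
      exact hLmul y (hLD hy) f hfL
  obtain ⟨g, -, hgf⟩ : q ∈ (· * f) '' L := by rwa [hLf]
  calc f = q * f := hqf.symm
    _ = q := by rw [← hgf, mul_assoc, hff]

theorem exists_idempotent_mul_eq_self {q : M} (hmul : ∀ r : M, Continuous (· * r))
    {R : Set M} (hne : R.Nonempty) (hR : IsCompact R) (hRmul : ∀ x ∈ R, ∀ y ∈ R, x * y ∈ R)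
    (hRq : ∀ x ∈ R, x * q ∈ R) (hqq : q * q = q) :
    ∃ u ∈ R, u * u = u ∧ u * q = u := by
  obtain ⟨u, ⟨x, hx, rfl⟩, huu⟩ := exists_idempotent_in_compact_subsemigroup hmul
    ((· * q) '' R) (hne.image _) (hR.image (hmul q)) <| by
      rintro _ ⟨x, hx, rfl⟩ _ ⟨y, hy, rfl⟩
      exact ⟨x * q * y, hRmul _ (hRq x hx) y hy, by simp only [mul_assoc]⟩
  exact ⟨x * q, hRq x hx, huu, by rw [mul_assoc, hqq]⟩

end MinimalIdempotent

theorem MulHom.mul_eq_of_minimal_idempotent {M : Type*} [Semigroup M] (σ : M →ₙ* M)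
    {D : Set M} (hDmul : ∀ x ∈ D, ∀ y ∈ D, x * y ∈ D) {q : M} (hqD : q ∈ D) (hqq : q * q = q)
    (hmin : ∀ f ∈ D, f * f = f → f * q = f → q * f = f → f = q) (hσq : σ q = q)
    {u : M} (huu : u * u = u) (huq : u * q = u) (hσu : σ u ∈ D) :
    σ u * q = σ u ∧ q * σ u = q := by
  have hright : σ u * q = σ u := by rw [← hσq, ← map_mul, huq]
  refine ⟨hright, hmin _ (hDmul q hqD _ hσu) ?_ ?_ ?_⟩
  · rw [mul_assoc, ← mul_assoc (σ u), hright, ← map_mul, huu]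
  · rw [mul_assoc, hright]
  · rw [← mul_assoc, hqq]

namespace Ultrafilter

theorem map_eq_self_of_eqOn {M : Type*} {f : M → M} {U : Ultrafilter M} {S : Set M}
    (hS : S ∈ U) (hf : Set.EqOn f id S) : U.map f = U :=
  coe_injective <| by
    rw [coe_map, Filter.map_congr (Filter.mem_of_superset hS hf), Filter.map_id]

variable {M N : Type*} [Mul M] [Mul N]

theorem mem_mul_of_forall_mul_mem {U V : Ultrafilter M} {S T R : Set M}
    (h : ∀ x ∈ S, ∀ y ∈ T, x * y ∈ R) (hS : S ∈ U) (hT : T ∈ V) : R ∈ U * V :=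
  (U.eventually_mul V (· ∈ R)).2 <|
    Filter.mem_of_superset hS fun x hx => Filter.mem_of_superset hT fun y hy => h x hx y hy

theorem map_mul (f : M →ₙ* N) (U V : Ultrafilter M) : (U * V).map f = U.map f * V.map f := by
  ext S
  change (∀ᶠ x in U, ∀ᶠ y in V, f (x * y) ∈ S) ↔ ∀ᶠ x in U, ∀ᶠ y in V, f x * f y ∈ S
  simp only [_root_.map_mul]

def mapMulHom (f : M →ₙ* N) : Ultrafilter M →ₙ* Ultrafilter N where
  toFun U := U.map f
  map_mul' := map_mul f

end Ultrafilter

theorem List.flatten_ofFn_succ' {β : Type*} {k : ℕ} (f : Fin (k + 1) → List β) :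
    (List.ofFn f).flatten = (List.ofFn fun j => f j.castSucc).flatten ++ f (Fin.last k) := by
  rw [List.ofFn_succ', List.concat_eq_append, List.flatten_concat]

namespace HJ

abbrev Word (α : Type*) := List (Option α)

variable {α : Type*}

local instance : Semigroup (Word α) where
  mul := (· ++ ·)
  mul_assoc := List.append_assoc

def constWords (A : Set α) : Set (Word α) :=
  {w | (∀ a, some a ∈ w → a ∈ A) ∧ none ∉ w}

def leftVarWords (A : Set α) : Set (Word α) :=
  {w | (∀ a, some a ∈ w → a ∈ A) ∧ w.head? = some none}

def substHom (a : α) : Word α →ₙ* Word α where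
  toFun w := substV w (some a)
  map_mul' _ _ := List.map_append

@[simp]
theorem substHom_apply (a : α) (w : Word α) : substHom a w = substV w (some a) := rfl

theorem substHom_eq_self {w : Word α} (hw : none ∉ w) (a : α) : substHom a w = w := by
  conv_rhs => rw [← List.map_id w]
  refine List.map_congr_left fun c hc => ?_
  cases c
  exacts [absurd hc hw, rfl]

theorem map_some_substC_s18 (w : Word α) (a : α) : (substC w a).map some = substHom a w := by
  rw [substC, List.map_map, substHom_apply, substV]
  exact List.map_congr_left fun c _ => by cases c <;> rfl

theorem substHom_append (a : α) (v u : Word α) :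
    substHom a (v ++ u) = substHom a v ++ substHom a u :=
  map_mul (substHom a) v u

variable {A : Set α}

theorem constWords_append {w u : Word α} (hw : w ∈ constWords A) (hu : u ∈ constWords A) :
    w ++ u ∈ constWords A :=
  ⟨fun a ha => (List.mem_append.1 ha).elim (hw.1 a) (hu.1 a),
    fun h => (List.mem_append.1 h).elim hw.2 hu.2⟩

theorem leftVarWords_append {v u : Word α} (hv : v ∈ leftVarWords A)
    (hu : ∀ a, some a ∈ u → a ∈ A) : v ++ u ∈ leftVarWords A := by
  refine ⟨fun a ha => (List.mem_append.1 ha).elim (hv.1 a) (hu a), ?_⟩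
  rcases v with _ | ⟨b, v⟩
  · simp [leftVarWords] at hv
  · exact hv.2

theorem isVarWord_of_mem_leftVarWords {v : Word α} (hv : v ∈ leftVarWords A) :
    IsVarWord A v :=
  ⟨hv.1, List.mem_of_mem_head? hv.2⟩

theorem IsVarWord.append_left {v : Word α} (hv : IsVarWord A v) {e : Word α}
    (he : ∀ a, some a ∈ e → a ∈ A) : IsVarWord A (e ++ v) :=
  ⟨fun a ha => (List.mem_append.1 ha).elim (he a) (hv.1 a), List.mem_append_right e hv.2⟩

theorem substHom_mem_constWords {a : α} (ha : a ∈ A) {v : Word α}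
    (hv : ∀ b, some b ∈ v → b ∈ A) : substHom a v ∈ constWords A := by
  refine ⟨fun b hb => ?_, fun h => ?_⟩
  · obtain ⟨_ | c, hc, hcb⟩ := List.mem_map.1 hb
    · obtain rfl : a = b := Option.some_inj.1 hcb
      exact ha
    · obtain rfl : c = b := Option.some_inj.1 hcb
      exact hv c hc
  · obtain ⟨_ | c, -, h⟩ := List.mem_map.1 h <;> simp at h

theorem exists_absorbing_pair (A : Set α) :
    ∃ q p : Ultrafilter (Word α), constWords A ∈ q ∧ leftVarWords A ∈ p ∧
      ∀ a ∈ A, p.map (substHom a) * q = p.map (substHom a) ∧ q * p.map (substHom a) = q := by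
  have hcont : ∀ V : Ultrafilter (Word α), Continuous (· * V) :=
    Ultrafilter.continuous_mul_left
  have hDmul : ∀ U ∈ {U : Ultrafilter (Word α) | constWords A ∈ U}, ∀ V ∈ {U | constWords A ∈ U},
      U * V ∈ {U | constWords A ∈ U} := fun U hU V hV =>
    Ultrafilter.mem_mul_of_forall_mul_mem (fun _ hx _ hy => constWords_append hx hy) hU hV
  obtain ⟨q, hq, hqq, hqmin⟩ := exists_minimal_idempotent hcont
    ⟨pure [], by simp [constWords]⟩ (ultrafilter_isClosed_basic _).isCompact hDmul
  obtain ⟨p, hp, hpp, hpq⟩ := exists_idempotent_mul_eq_self hcont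
    (R := {U | leftVarWords A ∈ U}) ⟨pure [none], by simp [leftVarWords]⟩
    (ultrafilter_isClosed_basic _).isCompact
    (fun U hU V hV => Ultrafilter.mem_mul_of_forall_mul_mem
      (fun _ hx _ hy => leftVarWords_append hx hy.1) hU hV)
    (fun U hU => Ultrafilter.mem_mul_of_forall_mul_mem
      (fun _ hx _ hy => leftVarWords_append hx hy.1) hU hq) hqq
  refine ⟨q, p, hq, hp, fun a ha => ?_⟩
  refine (Ultrafilter.mapMulHom (substHom a)).mul_eq_of_minimal_idempotent hDmul hq hqq hqmin ?_
    hpp hpq ?_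
  · exact Ultrafilter.map_eq_self_of_eqOn hq fun w hw => substHom_eq_self hw.2 a
  · exact Ultrafilter.mem_map.2 <|
      Filter.mem_of_superset hp fun v hv => substHom_mem_constWords ha hv.1

theorem preimage_append_mem_mul_iff {U V : Ultrafilter (Word α)} {C : Set (Word α)}
    {w : Word α} : (w ++ ·) ⁻¹' C ∈ U * V ↔ ∀ᶠ x in U, (w ++ x ++ ·) ⁻¹' C ∈ V := by
  change (∀ᶠ x in U, ∀ᶠ y in V, w ++ (x ++ y) ∈ C) ↔ _
  simp only [← List.append_assoc]
  rfl

section Construction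

variable {q p : Ultrafilter (Word α)} {C : Set (Word α)}

def IsExtendable (A : Set α) (p : Ultrafilter (Word α)) (C : Set (Word α)) (w : Word α) :
    Prop :=
  ∀ b ∈ A, (w ++ ·) ⁻¹' C ∈ p.map (substHom b)

theorem exists_extendable_mem_constWords (hA : A.Finite) (hq : constWords A ∈ q)
    (hqp : ∀ a ∈ A, q * p.map (substHom a) = q) (hC : C ∈ q) :
    ∃ e ∈ constWords A, IsExtendable A p C e := by
  have hext : ∀ b ∈ A, ∀ᶠ w in q, (w ++ ·) ⁻¹' C ∈ p.map (substHom b) := fun b hb => by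
    rw [← hqp b hb] at hC
    exact hC
  exact (Filter.Eventually.and hq ((eventually_all_finite hA).2 hext)).exists

theorem exists_mem_leftVarWords_extending (hA : A.Finite) (hq : constWords A ∈ q)
    (hp : leftVarWords A ∈ p) (hpq : ∀ a ∈ A, p.map (substHom a) * q = p.map (substHom a))
    (hqp : ∀ a ∈ A, q * p.map (substHom a) = q) {P : Set (Word α)} (hP : P.Finite)
    (hPC : ∀ w ∈ P, IsExtendable A p C w) :
    ∃ t ∈ leftVarWords A, ∀ w ∈ P, ∀ a ∈ A,
      w ++ substHom a t ∈ C ∧ IsExtendable A p C (w ++ substHom a t) := by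
  have hv : ∀ᶠ v in p, ∀ w ∈ P, ∀ a ∈ A, (w ++ substHom a v ++ ·) ⁻¹' C ∈ q := by
    refine (eventually_all_finite hP).2 fun w hw => (eventually_all_finite hA).2 fun a ha => ?_
    have := hPC w hw a ha
    rw [← hpq a ha, preimage_append_mem_mul_iff] at this
    exact this
  obtain ⟨v, hvA, hv⟩ := (Filter.Eventually.and hp hv).exists
  have hu : ∀ᶠ u in q, ∀ w ∈ P, ∀ a ∈ A,
      w ++ substHom a v ++ u ∈ C ∧ IsExtendable A p C (w ++ substHom a v ++ u) := by
    refine (eventually_all_finite hP).2 fun w hw => (eventually_all_finite hA).2 fun a ha => ?_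
    refine Filter.Eventually.and (hv w hw a ha) ((eventually_all_finite hA).2 fun b hb => ?_)
    have := hv w hw a ha
    rw [← hqp b hb, preimage_append_mem_mul_iff] at this
    exact this
  obtain ⟨u, huA, hu⟩ := (Filter.Eventually.and hq hu).exists
  refine ⟨v ++ u, leftVarWords_append hvA huA.1, fun w hw a ha => ?_⟩
  rw [substHom_append, substHom_eq_self huA.2, ← List.append_assoc]
  exact hu w hw a ha

variable (A) in
def partialProducts (e : Word α) (s : ℕ → Word α) : ℕ → Set (Word α)
  | 0 => {e}
  | n + 1 => partialProducts e s n ∪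
      Set.image2 (fun w a => w ++ substHom a (s n)) (partialProducts e s n) A

theorem partialProducts_mono (e : Word α) (s : ℕ → Word α) :
    Monotone (partialProducts A e s) :=
  monotone_nat_of_le_succ fun _ => Set.subset_union_left

theorem append_flatten_mem_partialProducts (e : Word α) (s : ℕ → Word α) {k N : ℕ}
    {m : Fin k → ℕ} (hm : StrictMono m) (hmN : ∀ j, m j < N) {a : Fin k → α}
    (ha : ∀ j, a j ∈ A) :
    e ++ (List.ofFn fun j => substHom (a j) (s (m j))).flatten ∈ partialProducts A e s N := by
  induction k generalizing N with
  | zero => simpa using partialProducts_mono e s (Nat.zero_le N) rfl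
  | succ k ih =>
    rw [List.flatten_ofFn_succ', ← List.append_assoc]
    have hprefix := ih (hm.comp Fin.strictMono_castSucc) (fun j => hm (Fin.castSucc_lt_last j))
      (a := fun j => a j.castSucc) fun j => ha _
    exact partialProducts_mono e s (hmN _) <|
      Or.inr (Set.mem_image2_of_mem hprefix (ha (Fin.last k)))

theorem exists_seq_extending (hA : A.Finite) (hq : constWords A ∈ q)
    (hp : leftVarWords A ∈ p) (hpq : ∀ a ∈ A, p.map (substHom a) * q = p.map (substHom a))
    (hqp : ∀ a ∈ A, q * p.map (substHom a) = q) {e : Word α} (he : IsExtendable A p C e) :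
    ∃ s : ℕ → Word α, (∀ n, s n ∈ leftVarWords A) ∧
      ∀ (k : ℕ) (m : Fin (k + 1) → ℕ) (a : Fin (k + 1) → α), StrictMono m → (∀ j, a j ∈ A) →
        e ++ (List.ofFn fun j => substHom (a j) (s (m j))).flatten ∈ C := by
  let State := {P : Set (Word α) // P.Finite ∧ ∀ w ∈ P, IsExtendable A p C w}
  choose t ht hext using fun P : State =>
    exists_mem_leftVarWords_extending hA hq hp hpq hqp P.2.1 P.2.2
  let next (P : State) : State :=
    ⟨P.1 ∪ Set.image2 (fun w a => w ++ substHom a (t P)) P.1 A, P.2.1.union (P.2.1.image2 _ hA),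
      by
        rintro w (hw | ⟨w', hw', a, ha, rfl⟩)
        exacts [P.2.2 w hw, (hext P w' hw' a ha).2]⟩
  let state (n : ℕ) : State := next^[n] ⟨{e}, Set.finite_singleton e, by simpa using he⟩
  let s (n : ℕ) : Word α := t (state n)
  have hstate : ∀ n, (state n).1 = partialProducts A e s n := by
    intro n
    induction n with
    | zero => rfl
    | succ n ih =>
      simp only [state, Function.iterate_succ_apply'] at ih ⊢
      rw [partialProducts, ← ih]
  refine ⟨s, fun n => ht _, fun k m a hm ha => ?_⟩
  have hprefix := append_flatten_mem_partialProducts e s (hm.comp Fin.strictMono_castSucc)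
    (fun j => hm (Fin.castSucc_lt_last j)) (a := fun j => a j.castSucc) fun j => ha _
  rw [← hstate] at hprefix
  rw [List.flatten_ofFn_succ', ← List.append_assoc]
  exact (hext _ _ hprefix _ (ha _)).1

end Construction

theorem map_some_flatten_substC {e : Word α} (he : none ∉ e) {s t : ℕ → Word α}
    (ht₀ : t 0 = e ++ s 0) (ht : ∀ k, k ≠ 0 → t k = s k) {n : ℕ} {m : Fin (n + 1) → ℕ}
    (hm : StrictMono m) (hm₀ : m 0 = 0) (a : Fin (n + 1) → α) :
    (List.ofFn fun j => substC (t (m j)) (a j)).flatten.map some =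
      e ++ (List.ofFn fun j => substHom (a j) (s (m j))).flatten := by
  have hpos (j : Fin n) : m j.succ ≠ 0 := (hm₀ ▸ hm (Fin.succ_pos j)).ne'
  simp only [List.ofFn_succ, List.flatten_cons, List.map_append, List.map_flatten, List.map_ofFn,
    Function.comp_def, map_some_substC_s18, hm₀, ht₀, ht _ (hpos _), substHom_append,
    substHom_eq_self he, List.append_assoc]

end HJ

open HJ in
theorem stmt18_general {α : Type*} (A : Finset α) (r : ℕ) (c : List α → Fin r) :
    ∃ t : ℕ → List (Option α),
      (∀ n, IsVarWord (A : Set α) (t n)) ∧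
      (∀ n : ℕ, 1 ≤ n → (t n).head? = some none) ∧
      ∃ col : Fin r,
        ∀ (n : ℕ) (m : Fin (n + 1) → ℕ) (a : Fin (n + 1) → α),
          StrictMono m → m 0 = 0 → (∀ j, a j ∈ A) →
          c ((List.ofFn fun j => substC (t (m j)) (a j)).flatten) = col := by
  obtain ⟨q, p, hq, hp, habs⟩ := exists_absorbing_pair (A : Set α)
  obtain ⟨col, hcol⟩ := Ultrafilter.eq_pure_of_finite (q.map fun w : Word α => c w.reduceOption)
  have hC : {w : Word α | c w.reduceOption = col} ∈ q :=
    Ultrafilter.mem_map.1 (hcol ▸ rfl : {col} ∈ q.map fun w : Word α => c w.reduceOption)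
  obtain ⟨e, he, hext⟩ :=
    exists_extendable_mem_constWords A.finite_toSet hq (fun a ha => (habs a ha).2) hC
  obtain ⟨s, hs, hsC⟩ := exists_seq_extending A.finite_toSet hq hp (fun a ha => (habs a ha).1)
    (fun a ha => (habs a ha).2) hext
  refine ⟨fun n => if n = 0 then e ++ s 0 else s n, fun n => ?_, fun n hn => ?_, col,
    fun n m a hm hm₀ ha => ?_⟩
  · rcases eq_or_ne n 0 with rfl | hn
    · simpa using (isVarWord_of_mem_leftVarWords (hs 0)).append_left he.1
    · simpa [hn] using isVarWord_of_mem_leftVarWords (hs n)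
  · simpa [Nat.one_le_iff_ne_zero.1 hn] using (hs n).2
  · have hprod := hsC n m a hm ha
    rw [← map_some_flatten_substC he.2 (if_pos rfl) (fun k hk => if_neg hk) hm hm₀] at hprod
    have hred (l : List α) : (l.map some).reduceOption = l := by simp [List.reduceOption]
    simpa only [Set.mem_ofPred, hred] using hprod

open HJ in
/-- McCutcheon's left-variable version: all the variable words after the first
may be taken to be left variable words, and the indices start with `m₀ = 0`. -/
theorem stmt18 {α : Type*} (A : Finset α) (hA : A.Nonempty)
    (r : ℕ) (hr : 1 ≤ r) (c : List α → Fin r) :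
    ∃ t : ℕ → List (Option α),
      (∀ n, IsVarWord (A : Set α) (t n)) ∧
      (∀ n : ℕ, 1 ≤ n → (t n).head? = some none) ∧
      ∃ col : Fin r,
        ∀ (n : ℕ) (m : Fin (n + 1) → ℕ) (a : Fin (n + 1) → α),
          StrictMono m → m 0 = 0 → (∀ j, a j ∈ A) →
          c ((List.ofFn fun j => substC (t (m j)) (a j)).flatten) = col :=
  stmt18_general A r c
end
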